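/- Let $T>0$ and $q \in L^4([0,T];\mathbb R)$ with $q_u \ne 0$ for a.e. $u$. Consider $J_2(\Gamma) := \int_0^T (|\Gamma_u|^2 - q_u \int_0^u q_s \Gamma_s ds) du$ on $L^2([0,T];\mathbb R)$. Then the unique minimizer $\Gamma^*$ of $J_2$ satisfies, for some constant $c_2 \in \mathbb R$, $\Gamma^*_u = -\frac{1}{2} q_u (\int_0^u q_s ds + c_2)$ for almost every $u \in [0,T]$. -/

import Mathlib

/-!
Fubini on the triangle `0 < s ≤ u ≤ T` turns the cross term of `J₂` into a linear functional,
`J₂(Γ) = ∫₀ᵀ (Γ_u² - g_u Γ_u) du` with `g_u = q_u ∫ᵤᵀ q_s ds`. Completing the square gives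
`J₂(Γ) = ‖Γ - g/2‖₂² - ‖g/2‖₂²`, so every minimizer equals `g/2` almost everywhere, and
`∫ᵤᵀ q = ∫₀ᵀ q - ∫₀ᵘ q` puts `g/2` in the stated form with `c₂ = -∫₀ᵀ q`.
-/

open MeasureTheory Filter Set Topology

open scoped ENNReal

/-- The functional `J₂(Γ) = ∫₀ᵀ (|Γ_u|² - q_u ∫₀ᵘ q_s Γ_s ds) du`. -/
noncomputable def J2 (T : ℝ) (q Γ : ℝ → ℝ) : ℝ :=
  ∫ u in Icc (0:ℝ) T, (Γ u ^ 2 - q u * ∫ s in Ioc (0:ℝ) u, q s * Γ s)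

theorem ContinuousOn.memLp_top_restrict {α E : Type*} [TopologicalSpace α] [MeasurableSpace α]
    [OpensMeasurableSpace α] [SecondCountableTopology α] [NormedAddCommGroup E]
    {μ : Measure α} {s : Set α} {F : α → E}
    (hF : ContinuousOn F s) (hs : IsCompact s) (hsm : MeasurableSet s) :
    MemLp F ∞ (μ.restrict s) := by
  obtain ⟨C, hC⟩ := hs.exists_bound_of_continuousOn hF
  exact memLp_top_of_bound (hF.aestronglyMeasurable hsm) C (ae_restrict_of_forall_mem hsm hC)

section Primitive

variable {μ : Measure ℝ} {a b : ℝ} {f q : ℝ → ℝ}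

theorem setIntegral_Ioc_eq_sub (hf : IntegrableOn f (Ioc a b) μ) {u : ℝ} (hu : u ∈ Icc a b) :
    ∫ s in Ioc u b, f s ∂μ = (∫ s in Ioc a b, f s ∂μ) - ∫ s in Ioc a u, f s ∂μ := by
  rw [eq_sub_iff_add_eq', ← setIntegral_union (Ioc_disjoint_Ioc_of_le le_rfl) measurableSet_Ioc
    (hf.mono_set (Ioc_subset_Ioc_right hu.2)) (hf.mono_set (Ioc_subset_Ioc_left hu.1)),
    Ioc_union_Ioc_eq_Ioc hu.1 hu.2]

theorem continuousOn_setIntegral_Ioc_left [NullSingletonClass μ]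
    (hf : IntegrableOn f (Icc a b) μ) :
    ContinuousOn (fun u => ∫ s in Ioc u b, f s ∂μ) (Icc a b) :=
  (continuousOn_const.sub (intervalIntegral.continuousOn_primitive hf)).congr fun _ hu =>
    setIntegral_Ioc_eq_sub (hf.mono_set Ioc_subset_Icc_self) hu

theorem setIntegral_Ioc_mul_setIntegral_Ioc_swap [SFinite μ] [NullSingletonClass μ]
    (hq : IntegrableOn q (Ioc a b) μ) (hf : IntegrableOn f (Ioc a b) μ) :
    ∫ u in Ioc a b, q u * ∫ s in Ioc a u, f s ∂μ ∂μ
      = ∫ s in Ioc a b, (∫ u in Ioc s b, q u ∂μ) * f s ∂μ := by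
  set ν := μ.restrict (Ioc a b)
  have hind : ∀ u s, q u * (Ioc a u).indicator f s
      = {p : ℝ × ℝ | a < p.2 ∧ p.2 ≤ p.1}.indicator (fun p => q p.1 * f p.2) (u, s) := by
    intro u s
    by_cases h : a < s ∧ s ≤ u <;> simp [h]
  have hint : Integrable (Function.uncurry fun u s => q u * (Ioc a u).indicator f s)
      (ν.prod ν) := by
    refine ((hq.mul_prod hf).indicator ?_).congr
      (Eventually.of_forall fun p => (hind p.1 p.2).symm)
    exact (measurableSet_lt measurable_const measurable_snd).inter
      (measurableSet_le measurable_snd measurable_fst)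
  calc ∫ u in Ioc a b, q u * ∫ s in Ioc a u, f s ∂μ ∂μ
      = ∫ u, ∫ s, q u * (Ioc a u).indicator f s ∂ν ∂ν := by
        refine setIntegral_congr_fun measurableSet_Ioc fun u hu => ?_
        rw [integral_const_mul, integral_indicator measurableSet_Ioc,
          Measure.restrict_restrict measurableSet_Ioc,
          inter_eq_left.2 (Ioc_subset_Ioc_right hu.2)]
    _ = ∫ s, ∫ u, q u * (Ioc a u).indicator f s ∂ν ∂ν := integral_integral_swap hint
    _ = ∫ s in Ioc a b, (∫ u in Ioc s b, q u ∂μ) * f s ∂μ := by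
        refine setIntegral_congr_fun measurableSet_Ioc fun s hs => ?_
        have hcut : (fun u => q u * (Ioc a u).indicator f s)
            = (Ici s).indicator fun u => q u * f s := by
          ext u
          by_cases h : s ≤ u <;> simp [h, hs.1]
        have hset : Ici s ∩ Ioc a b = Icc s b := by
          ext u
          simp only [mem_inter_iff, mem_Ici, mem_Ioc, mem_Icc]
          exact ⟨fun h => ⟨h.1, h.2.2⟩, fun h => ⟨h.1, hs.1.trans_le h.1, h.2⟩⟩
        rw [hcut, integral_indicator measurableSet_Ici,
          Measure.restrict_restrict measurableSet_Ici, hset, integral_mul_const,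
          integral_Icc_eq_integral_Ioc]

end Primitive

section CompletingTheSquare

variable {α : Type*} [MeasurableSpace α] {μ : Measure α} {g Γ₀ : α → ℝ}

theorem integral_sq_sub_mul_eq {Γ : α → ℝ} (hg : MemLp g 2 μ) (hΓ : MemLp Γ 2 μ) :
    ∫ x, (Γ x ^ 2 - g x * Γ x) ∂μ = ∫ x, (Γ x - g x / 2) ^ 2 ∂μ - ∫ x, (g x / 2) ^ 2 ∂μ := by
  have hg2 : MemLp (fun x => g x / 2) 2 μ := by
    simpa only [div_eq_mul_inv] using hg.mul_const 2⁻¹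
  have hsq : Integrable (fun x => (Γ x - g x / 2) ^ 2) μ := (hΓ.sub hg2).integrable_sq
  rw [← integral_sub hsq hg2.integrable_sq]
  exact integral_congr_ae (Eventually.of_forall fun x => by ring)

theorem ae_eq_half_of_forall_integral_sq_sub_mul_le (hg : MemLp g 2 μ) (hΓ₀ : MemLp Γ₀ 2 μ)
    (hmin : ∀ Γ, MemLp Γ 2 μ →
      ∫ x, (Γ₀ x ^ 2 - g x * Γ₀ x) ∂μ ≤ ∫ x, (Γ x ^ 2 - g x * Γ x) ∂μ) :
    Γ₀ =ᵐ[μ] fun x => g x / 2 := by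
  have hg2 : MemLp (fun x => g x / 2) 2 μ := by
    simpa only [div_eq_mul_inv] using hg.mul_const 2⁻¹
  have hle := hmin _ hg2
  rw [integral_sq_sub_mul_eq hg hΓ₀, integral_sq_sub_mul_eq hg hg2] at hle
  have hzero : ∫ x, (Γ₀ x - g x / 2) ^ 2 ∂μ = 0 :=
    le_antisymm (by simpa using hle) (integral_nonneg fun x => sq_nonneg _)
  filter_upwards [(integral_eq_zero_iff_of_nonneg (fun x => sq_nonneg _)
    (hΓ₀.sub hg2).integrable_sq).1 hzero] with x hx
  exact sub_eq_zero.1 (pow_eq_zero_iff two_ne_zero |>.1 hx)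

end CompletingTheSquare

noncomputable def J2Coeff (T : ℝ) (q : ℝ → ℝ) (u : ℝ) : ℝ := q u * ∫ s in Ioc u T, q s

section J2

variable {T : ℝ} {q Γ Γ₀ : ℝ → ℝ}

theorem memLp_J2Coeff (hq : MemLp q 2 (volume.restrict (Icc (0:ℝ) T))) :
    MemLp (J2Coeff T q) 2 (volume.restrict (Icc (0:ℝ) T)) :=
  ((continuousOn_setIntegral_Ioc_left (hq.integrable one_le_two)).memLp_top_restrict
    isCompact_Icc measurableSet_Icc).mul' hq

theorem J2_eq_integral (hq : MemLp q 2 (volume.restrict (Icc (0:ℝ) T)))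
    (hΓ : MemLp Γ 2 (volume.restrict (Icc (0:ℝ) T))) :
    J2 T q Γ = ∫ u in Icc (0:ℝ) T, (Γ u ^ 2 - J2Coeff T q u * Γ u) := by
  have hqΓ : IntegrableOn (fun s => q s * Γ s) (Icc (0:ℝ) T) := hq.integrable_mul hΓ
  have hqI : IntegrableOn q (Icc (0:ℝ) T) := hq.integrable one_le_two
  have hprim : Integrable (fun u => q u * ∫ s in Ioc (0:ℝ) u, q s * Γ s)
      (volume.restrict (Icc (0:ℝ) T)) :=
    hqI.mul_of_top_left ((intervalIntegral.continuousOn_primitive hqΓ).memLp_top_restrict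
      isCompact_Icc measurableSet_Icc)
  have hcoeffΓ : Integrable (fun u => J2Coeff T q u * Γ u)
      (volume.restrict (Icc (0:ℝ) T)) :=
    (memLp_J2Coeff hq).integrable_mul hΓ
  rw [J2, integral_sub hΓ.integrable_sq hprim, integral_sub hΓ.integrable_sq hcoeffΓ]
  simp only [integral_Icc_eq_integral_Ioc]
  rw [setIntegral_Ioc_mul_setIntegral_Ioc_swap (hqI.mono_set Ioc_subset_Icc_self)
    (hqΓ.mono_set Ioc_subset_Icc_self)]
  congr 1
  exact integral_congr_ae (Eventually.of_forall fun u => by simp only [J2Coeff]; ring)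

theorem ae_eq_half_J2Coeff_of_forall_J2_le (hq : MemLp q 2 (volume.restrict (Icc (0:ℝ) T)))
    (hΓ₀ : MemLp Γ₀ 2 (volume.restrict (Icc (0:ℝ) T)))
    (hmin : ∀ Γ, MemLp Γ 2 (volume.restrict (Icc (0:ℝ) T)) → J2 T q Γ₀ ≤ J2 T q Γ) :
    Γ₀ =ᵐ[volume.restrict (Icc (0:ℝ) T)] fun u => J2Coeff T q u / 2 :=
  ae_eq_half_of_forall_integral_sq_sub_mul_le (memLp_J2Coeff hq) hΓ₀ fun Γ hΓ => by
    simpa only [J2_eq_integral hq hΓ₀, J2_eq_integral hq hΓ] using hmin Γ hΓ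

end J2

theorem J2_minimizer_characterization_general
    (T : ℝ) (q : ℝ → ℝ)
    (hq : MemLp q 4 (volume.restrict (Icc (0:ℝ) T)))
    (Γstar : ℝ → ℝ) (hΓstar : MemLp Γstar 2 (volume.restrict (Icc (0:ℝ) T)))
    (hmin : ∀ Γ : ℝ → ℝ, MemLp Γ 2 (volume.restrict (Icc (0:ℝ) T)) →
      J2 T q Γstar ≤ J2 T q Γ) :
    (∃ c₂ : ℝ, Γstar =ᵐ[volume.restrict (Icc (0:ℝ) T)]
        fun u => -(1/2) * q u * ((∫ s in Ioc (0:ℝ) u, q s) + c₂)) ∧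
    (∀ Γ' : ℝ → ℝ, MemLp Γ' 2 (volume.restrict (Icc (0:ℝ) T)) →
      (∀ Γ : ℝ → ℝ, MemLp Γ 2 (volume.restrict (Icc (0:ℝ) T)) → J2 T q Γ' ≤ J2 T q Γ) →
      Γ' =ᵐ[volume.restrict (Icc (0:ℝ) T)] Γstar) := by
  have hq2 : MemLp q 2 (volume.restrict (Icc (0:ℝ) T)) := hq.mono_exponent (by norm_num)
  have hΓstar_eq := ae_eq_half_J2Coeff_of_forall_J2_le hq2 hΓstar hmin
  refine ⟨⟨-∫ s in Ioc (0:ℝ) T, q s, ?_⟩, fun Γ' hΓ' hmin' =>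
    (ae_eq_half_J2Coeff_of_forall_J2_le hq2 hΓ' hmin').trans hΓstar_eq.symm⟩
  have hqI : IntegrableOn q (Ioc (0:ℝ) T) :=
    IntegrableOn.mono_set (hq2.integrable one_le_two) Ioc_subset_Icc_self
  filter_upwards [hΓstar_eq, ae_restrict_mem measurableSet_Icc] with u hu hu_mem
  rw [hu, J2Coeff, setIntegral_Ioc_eq_sub hqI hu_mem]
  ring

/-- For `q ∈ L⁴([0,T])` with `q ≠ 0` a.e., any minimizer `Γ*` of
`J₂(Γ) = ∫₀ᵀ (|Γ_u|² - q_u ∫₀ᵘ q_s Γ_s ds) du` over `L²([0,T])` satisfies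
`Γ*_u = -½ q_u (∫₀ᵘ q_s ds + c₂)` a.e. for some constant `c₂`, and the minimizer
is a.e. unique. -/
theorem J2_minimizer_characterization
    (T : ℝ) (hT : 0 < T) (q : ℝ → ℝ)
    (hq : MemLp q 4 (volume.restrict (Icc (0:ℝ) T)))
    (hqne : ∀ᵐ u ∂(volume.restrict (Icc (0:ℝ) T)), q u ≠ 0)
    (Γstar : ℝ → ℝ) (hΓstar : MemLp Γstar 2 (volume.restrict (Icc (0:ℝ) T)))
    (hmin : ∀ Γ : ℝ → ℝ, MemLp Γ 2 (volume.restrict (Icc (0:ℝ) T)) →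
      J2 T q Γstar ≤ J2 T q Γ) :
    (∃ c₂ : ℝ, Γstar =ᵐ[volume.restrict (Icc (0:ℝ) T)]
        fun u => -(1/2) * q u * ((∫ s in Ioc (0:ℝ) u, q s) + c₂)) ∧
    (∀ Γ' : ℝ → ℝ, MemLp Γ' 2 (volume.restrict (Icc (0:ℝ) T)) →
      (∀ Γ : ℝ → ℝ, MemLp Γ 2 (volume.restrict (Icc (0:ℝ) T)) → J2 T q Γ' ≤ J2 T q Γ) →
      Γ' =ᵐ[volume.restrict (Icc (0:ℝ) T)] Γstar) :=
  J2_minimizer_characterization_general T q hq Γstar hΓstar hmin
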